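/- Let p, d be positive integers, let Θ* be a symmetric positive definite p×p real matrix, let S := {(j,k) : Θ*_{jk} ≠ 0} be its support (which contains all diagonal pairs), and suppose every row of Θ* has at most d nonzero entries. Set Σ* := (Θ*)^{−1} and Γ* := Σ* ⊗ Σ* (a p²×p² matrix indexed by pairs), and suppose the submatrix Γ*_{SS} (rows and columns indexed by pairs in S) is invertible; let κ_Γ := |||(Γ*_{SS})^{−1}|||_∞ and κ_Σ := |||Σ*|||_∞. Let Σ̂ be a symmetric p×p matrix and r > 0 such that κ_Γ · max_{(j,k) ∈ S} |Σ̂_{jk} − Σ*_{jk}| ≤ r/2 and d·r ≤ min{λ_min(Θ*)/2, 1/(2κ_Σ), 1/(4κ_Γκ_Σ³)}, where λ_min(Θ*) is the minimum eigenvalue of Θ*. Then there exists a symmetric p×p matrix Θ̂ with support contained in S such that: (1) max_{j,k}|Θ̂_{jk} − Θ*_{jk}| ≤ r; (2) the spectral norm satisfies ‖Θ̂ − Θ*‖₂ ≤ d·r; (3) Θ̂ is invertible; and (4) Σ̂_{jk} = (Θ̂^{−1})_{jk} for all (j,k) ∈ S. -/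

import Mathlib

open scoped BigOperators Kronecker
open Matrix

noncomputable def matInf {m n : Type*} [Fintype m] [Fintype n] (M : Matrix m n ℝ) : ℝ :=
  ⨆ i, ∑ j, |M i j|

noncomputable def specNorm {p : ℕ} (M : Matrix (Fin p) (Fin p) ℝ) : ℝ :=
  ‖Matrix.toEuclideanCLM (𝕜 := ℝ) M‖

noncomputable def kronSS (p : ℕ) (Sig : Matrix (Fin p) (Fin p) ℝ)
    (S : Finset (Fin p × Fin p)) : Matrix {q // q ∈ S} {q // q ∈ S} ℝ :=
  (Sig ⊗ₖ Sig).submatrix (fun a => (a : Fin p × Fin p)) (fun b => (b : Fin p × Fin p))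

/-!
Write `Θ̂ = Θ* + Δ` with `Δ = embedOn S x` supported on `S`, and let
`R(Δ) = (Θ* + Δ)⁻¹ - Σ* + Σ* Δ Σ*`. Since `(Γ*_{SS} x)_{jk} = (Σ* Δ Σ*)_{jk}`, the condition
`(Θ̂⁻¹)_S = Σ̂_S` says exactly that `x` is a fixed point of
`F(x) = Γ*_{SS}⁻¹ (R(Δ) - (Σ̂ - Σ*))_S`. The remainder `R` is quadratic in `Δ`, and every
row of `Δ` has at most `d` entries of size `≤ r`; with `κ_Γ κ_Σ³ d r ≤ 1/4` this makes `F` map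
the sup-norm ball of radius `r` into itself and contract it with constant `7/9`, so Banach's
theorem gives the fixed point. `F` commutes with transposition of `S`, so by uniqueness the
fixed point is symmetric. Invertibility of `Θ̂` is a Neumann-series argument:
`|||Σ* Δ|||_∞ ≤ κ_Σ d r ≤ 1/4`.
-/

-- Throughout, `‖·‖` on matrices is the `ℓ_∞`-operator norm `matInf` (`Matrix.matInf_eq_norm`).
attribute [local instance] Matrix.linftyOpNormedAddCommGroup Matrix.linftyOpNormedRing
  Matrix.linftyOpNormedSpace

open Set Metric
open scoped NNReal

lemma exists_common_fixedPoint_of_contractingOn {α : Type*} [MetricSpace α] [CompleteSpace α]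
    {s : Set α} (hs : IsClosed s) (hne : s.Nonempty) {f g : α → α} {K : ℝ≥0} (hK : K < 1)
    (hfs : MapsTo f s s) (hf : ∀ x ∈ s, ∀ y ∈ s, dist (f x) (f y) ≤ K * dist x y)
    (hgs : MapsTo g s s) (hfg : ∀ x ∈ s, f (g x) = g (f x)) :
    ∃ z ∈ s, f z = z ∧ g z = z := by
  obtain ⟨x, hx⟩ := hne
  have hcontr : ContractingWith K (hfs.restrict f s s) :=
    ⟨hK, LipschitzWith.of_dist_le_mul fun a b => hf a a.2 b b.2⟩
  obtain ⟨z, hz, hfz, -⟩ := hcontr.exists_fixedPoint' hs.isComplete hfs hx (edist_ne_top _ _)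
  refine ⟨z, hz, hfz, ?_⟩
  -- `g z` is another fixed point of `f` in `s`, and a contraction has only one.
  have hgz : dist (g z) z ≤ K * dist (g z) z := by
    simpa only [hfg z hz, hfz.eq] using hf (g z) (hgs hz) z hz
  have hK' : (K : ℝ) < 1 := hK
  exact dist_le_zero.mp (by nlinarith [dist_nonneg (x := g z) (y := z)])

namespace Matrix

section LinftyNorm

variable {m n l : Type*} [Fintype m] [Fintype n]

lemma matInf_eq_norm (M : Matrix m n ℝ) : matInf M = ‖M‖ := by
  let f : m → ℝ≥0 := fun i => ∑ j, ‖M i j‖₊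
  calc matInf M = ⨆ i, (f i : ℝ) := by simp [matInf, f, Real.norm_eq_abs]
    _ = (Finset.univ.sup f : ℝ≥0) := by rw [← NNReal.coe_iSup, Finset.sup_univ_eq_ciSup]
    _ = ‖M‖ := (linfty_opNorm_def M).symm

lemma sum_abs_le_norm (M : Matrix m n ℝ) (i : m) : ∑ j, |M i j| ≤ ‖M‖ := by
  rw [← matInf_eq_norm]
  exact le_ciSup (f := fun i => ∑ j, |M i j|) (Set.finite_range _).bddAbove i

lemma norm_le_of_sum_abs_le {M : Matrix m n ℝ} {c : ℝ} (h : ∀ i, ∑ j, |M i j| ≤ c)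
    (hc : 0 ≤ c) : ‖M‖ ≤ c := by
  rw [← matInf_eq_norm]
  exact Real.iSup_le h hc

lemma abs_mul_apply_le (M : Matrix m n ℝ) (N : Matrix n l ℝ) {c : ℝ} (hc : 0 ≤ c) {t : l}
    (hN : ∀ u, |N u t| ≤ c) (s : m) : |(M * N) s t| ≤ ‖M‖ * c :=
  calc |(M * N) s t| = ‖(M *ᵥ fun u => N u t) s‖ := rfl
    _ ≤ ‖M *ᵥ fun u => N u t‖ := norm_le_pi_norm _ s
    _ ≤ ‖M‖ * ‖fun u => N u t‖ := linfty_opNorm_mulVec _ _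
    _ ≤ ‖M‖ * c := by gcongr; exact (pi_norm_le_iff_of_nonneg hc).mpr hN

lemma abs_mul_mul_apply_le (W E A : Matrix n n ℝ) {e : ℝ} (he : 0 ≤ e)
    (hE : ∀ i j, |E i j| ≤ e) (s t : n) : |(W * E * A) s t| ≤ ‖W‖ * e * ‖Aᵀ‖ := by
  rw [mul_assoc W, mul_assoc ‖W‖]
  refine abs_mul_apply_le W (E * A) (by positivity) (fun u => ?_) s
  rw [← transpose_apply (E * A), transpose_mul, mul_comm e]
  exact abs_mul_apply_le _ _ he (fun v => hE u v) t

lemma one_le_norm_inv_mul_norm [DecidableEq n] [Nonempty n] {A : Matrix n n ℝ}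
    (hA : IsUnit A.det) : 1 ≤ ‖A⁻¹‖ * ‖A‖ :=
  calc (1 : ℝ) = ‖A⁻¹ * A‖ := by rw [nonsing_inv_mul _ hA, norm_one]
    _ ≤ ‖A⁻¹‖ * ‖A‖ := norm_mul_le _ _

lemma isUnit_det_add [DecidableEq n] {Θ Δ : Matrix n n ℝ} (hΘ : IsUnit Θ.det)
    (h : ‖Θ⁻¹‖ * ‖Δ‖ < 1) : IsUnit (Θ + Δ).det := by
  have := FiniteDimensional.complete ℝ (Matrix n n ℝ)
  have hneg : IsUnit (1 - -(Θ⁻¹ * Δ)) :=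
    (Units.oneSub _ ((norm_neg _).trans_lt ((norm_mul_le _ _).trans_lt h))).isUnit
  have hfac : Θ + Δ = Θ * (1 - -(Θ⁻¹ * Δ)) := by
    rw [sub_neg_eq_add, mul_add, mul_one, ← mul_assoc, mul_nonsing_inv _ hΘ, one_mul]
  rw [← isUnit_iff_isUnit_det, hfac]
  exact ((isUnit_iff_isUnit_det _).mpr hΘ).mul hneg

lemma specNorm_le_norm {p : ℕ} {M : Matrix (Fin p) (Fin p) ℝ} (hM : M.IsSymm) :
    specNorm M ≤ ‖M‖ := by
  refine ContinuousLinearMap.opNorm_le_bound _ (norm_nonneg _) fun v => ?_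
  have hcol : ∀ j, ∑ i, |M i j| ≤ ‖M‖ := fun j => by
    simpa only [hM.apply] using sum_abs_le_norm M j
  have hrow : ∀ i, (toEuclideanCLM (𝕜 := ℝ) M v i) ^ 2 ≤ ‖M‖ * ∑ j, |M i j| * v j ^ 2 := by
    intro i
    calc (toEuclideanCLM (𝕜 := ℝ) M v i) ^ 2 = (∑ j, M i j * v j) ^ 2 := rfl
      _ ≤ (∑ j, |M i j|) * ∑ j, |M i j| * v j ^ 2 :=
        Finset.sum_sq_le_sum_mul_sum_of_sq_le_mul _ (fun _ _ => abs_nonneg _)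
          (fun _ _ => by positivity)
          (fun j _ => le_of_eq (by rw [← mul_assoc, abs_mul_abs_self]; ring))
      _ ≤ ‖M‖ * ∑ j, |M i j| * v j ^ 2 := by gcongr; exact sum_abs_le_norm M i
  have hsq : ‖toEuclideanCLM (𝕜 := ℝ) M v‖ ^ 2 ≤ (‖M‖ * ‖v‖) ^ 2 := by
    rw [EuclideanSpace.real_norm_sq_eq, mul_pow, EuclideanSpace.real_norm_sq_eq]
    calc ∑ i, (toEuclideanCLM (𝕜 := ℝ) M v i) ^ 2
        ≤ ∑ i, ‖M‖ * ∑ j, |M i j| * v j ^ 2 := Finset.sum_le_sum fun i _ => hrow i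
      _ = ‖M‖ * ∑ j, (∑ i, |M i j|) * v j ^ 2 := by
        rw [← Finset.mul_sum, Finset.sum_comm]; simp only [Finset.sum_mul]
      _ ≤ ‖M‖ * ∑ j, ‖M‖ * v j ^ 2 := by gcongr with j; exact hcol j
      _ = ‖M‖ ^ 2 * ∑ j, v j ^ 2 := by rw [← Finset.mul_sum]; ring
  exact (pow_le_pow_iff_left₀ (norm_nonneg _) (by positivity) two_ne_zero).mp hsq

end LinftyNorm

section Perturbation

variable {n : Type*} [Fintype n] [DecidableEq n] {Θ Δ Δ' : Matrix n n ℝ}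

/-- The second-order remainder `R(Δ)` of the expansion `(Θ + Δ)⁻¹ ≈ Θ⁻¹ - Θ⁻¹ Δ Θ⁻¹`. -/
noncomputable def invRemainder (Θ Δ : Matrix n n ℝ) : Matrix n n ℝ :=
  (Θ + Δ)⁻¹ - Θ⁻¹ + Θ⁻¹ * Δ * Θ⁻¹

lemma inv_sub_inv_add (hΘ : IsUnit Θ.det) (hΘΔ : IsUnit (Θ + Δ).det) :
    Θ⁻¹ - (Θ + Δ)⁻¹ = (Θ + Δ)⁻¹ * Δ * Θ⁻¹ := by
  have h : (Θ + Δ)⁻¹ * (Θ + Δ) * Θ⁻¹ = Θ⁻¹ := by rw [nonsing_inv_mul _ hΘΔ, one_mul]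
  rw [mul_add, add_mul, mul_assoc _ Θ, mul_nonsing_inv _ hΘ, mul_one] at h
  conv_lhs => rw [← h]
  exact add_sub_cancel_left _ _

lemma inv_add_sub_inv_add (hΘΔ : IsUnit (Θ + Δ).det) (hΘΔ' : IsUnit (Θ + Δ').det) :
    (Θ + Δ')⁻¹ - (Θ + Δ)⁻¹ = (Θ + Δ)⁻¹ * (Δ - Δ') * (Θ + Δ')⁻¹ := by
  have h : (Θ + Δ)⁻¹ * ((Θ + Δ) - (Θ + Δ')) * (Θ + Δ')⁻¹ = (Θ + Δ')⁻¹ - (Θ + Δ)⁻¹ := by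
    rw [mul_sub, sub_mul, nonsing_inv_mul _ hΘΔ, one_mul, mul_assoc, mul_nonsing_inv _ hΘΔ',
      mul_one]
  rw [← h, add_sub_add_left_eq_sub]

lemma invRemainder_eq (hΘ : IsUnit Θ.det) (hΘΔ : IsUnit (Θ + Δ).det) :
    invRemainder Θ Δ = (Θ⁻¹ - (Θ + Δ)⁻¹) * Δ * Θ⁻¹ := by
  rw [invRemainder, sub_mul, sub_mul, ← inv_sub_inv_add hΘ hΘΔ]; abel

lemma invRemainder_sub_invRemainder (hΘ : IsUnit Θ.det) (hΘΔ : IsUnit (Θ + Δ).det)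
    (hΘΔ' : IsUnit (Θ + Δ').det) :
    invRemainder Θ Δ - invRemainder Θ Δ' =
      (Θ + Δ)⁻¹ * (Δ - Δ') * (Θ + Δ')⁻¹ * Δ * Θ⁻¹
        + (Θ + Δ')⁻¹ * Δ' * Θ⁻¹ * (Δ - Δ') * Θ⁻¹ := by
  rw [invRemainder_eq hΘ hΘΔ, invRemainder_eq hΘ hΘΔ', ← inv_add_sub_inv_add hΘΔ hΘΔ',
    ← inv_sub_inv_add hΘ hΘΔ']
  noncomm_ring

lemma invRemainder_transpose (hΘ : Θ.IsSymm) (Δ : Matrix n n ℝ) :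
    invRemainder Θ Δᵀ = (invRemainder Θ Δ)ᵀ := by
  simp only [invRemainder, transpose_add, transpose_sub, transpose_mul, transpose_nonsing_inv,
    hΘ.eq, hΘ.inv.eq, mul_assoc]

lemma norm_inv_add_le (hΘ : IsUnit Θ.det) (h : ‖Θ⁻¹‖ * ‖Δ‖ ≤ 1 / 4) :
    ‖(Θ + Δ)⁻¹‖ ≤ 4 / 3 * ‖Θ⁻¹‖ := by
  have hΘΔ := isUnit_det_add hΘ (h.trans_lt (by norm_num))
  have hB : ‖(Θ + Δ)⁻¹‖ ≤ ‖Θ⁻¹‖ + ‖(Θ + Δ)⁻¹‖ * (‖Δ‖ * ‖Θ⁻¹‖) :=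
    calc ‖(Θ + Δ)⁻¹‖ = ‖Θ⁻¹ - (Θ + Δ)⁻¹ * Δ * Θ⁻¹‖ := by
          rw [← inv_sub_inv_add hΘ hΘΔ, sub_sub_cancel]
      _ ≤ ‖Θ⁻¹‖ + ‖(Θ + Δ)⁻¹‖ * (‖Δ‖ * ‖Θ⁻¹‖) := by
          refine (norm_sub_le _ _).trans (add_le_add le_rfl ?_)
          rw [mul_assoc]
          exact (norm_mul_le _ _).trans (by gcongr; exact norm_mul_le _ _)
  have hq : ‖(Θ + Δ)⁻¹‖ * (‖Δ‖ * ‖Θ⁻¹‖) ≤ ‖(Θ + Δ)⁻¹‖ * (1 / 4) :=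
    mul_le_mul_of_nonneg_left (by rwa [mul_comm]) (norm_nonneg _)
  linarith

lemma abs_invRemainder_apply_le (hΘ : Θ.IsSymm) (hdet : IsUnit Θ.det) {r : ℝ} (hr : 0 ≤ r)
    (hΔ : ∀ i j, |Δ i j| ≤ r) (hκ : ‖Θ⁻¹‖ * ‖Δ‖ ≤ 1 / 4) (s t : n) :
    |invRemainder Θ Δ s t| ≤ 4 / 3 * ‖Θ⁻¹‖ ^ 3 * ‖Δ‖ * r := by
  have hB := norm_inv_add_le hdet hκ
  rw [invRemainder_eq hdet (isUnit_det_add hdet (hκ.trans_lt (by norm_num))),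
    inv_sub_inv_add hdet (isUnit_det_add hdet (hκ.trans_lt (by norm_num)))]
  calc _ ≤ ‖(Θ + Δ)⁻¹ * Δ * Θ⁻¹‖ * r * ‖Θ⁻¹ᵀ‖ := abs_mul_mul_apply_le _ _ _ hr hΔ s t
    _ ≤ (4 / 3 * ‖Θ⁻¹‖) * ‖Δ‖ * ‖Θ⁻¹‖ * r * ‖Θ⁻¹‖ := by
      rw [hΘ.inv.eq]; gcongr; exact norm_mul₃_le.trans (by gcongr)
    _ = 4 / 3 * ‖Θ⁻¹‖ ^ 3 * ‖Δ‖ * r := by ring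

lemma abs_invRemainder_sub_apply_le (hΘ : Θ.IsSymm) (hdet : IsUnit Θ.det) {r e D E : ℝ}
    (hr : 0 ≤ r) (he : 0 ≤ e) (hΔ : ∀ i j, |Δ i j| ≤ r) (hΔΔ' : ∀ i j, |(Δ - Δ') i j| ≤ e)
    (hD : ‖Δ‖ ≤ D) (hD' : ‖Δ'‖ ≤ D) (hE : ‖Δ - Δ'‖ ≤ E) (hκ : ‖Θ⁻¹‖ * D ≤ 1 / 4) (s t : n) :
    |invRemainder Θ Δ s t - invRemainder Θ Δ' s t| ≤
      4 / 3 * ‖Θ⁻¹‖ ^ 3 * (4 / 3 * E * r + D * e) := by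
  have hκΔ : ‖Θ⁻¹‖ * ‖Δ‖ ≤ 1 / 4 := le_trans (by gcongr) hκ
  have hκΔ' : ‖Θ⁻¹‖ * ‖Δ'‖ ≤ 1 / 4 := le_trans (by gcongr) hκ
  have hB := norm_inv_add_le hdet hκΔ
  have hB' := norm_inv_add_le hdet hκΔ'
  rw [← sub_apply, invRemainder_sub_invRemainder hdet (isUnit_det_add hdet
    (hκΔ.trans_lt (by norm_num))) (isUnit_det_add hdet (hκΔ'.trans_lt (by norm_num))), add_apply]
  calc _ ≤ ‖(Θ + Δ)⁻¹ * (Δ - Δ') * (Θ + Δ')⁻¹‖ * r * ‖Θ⁻¹ᵀ‖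
        + ‖(Θ + Δ')⁻¹ * Δ' * Θ⁻¹‖ * e * ‖Θ⁻¹ᵀ‖ :=
      (abs_add_le _ _).trans (add_le_add (abs_mul_mul_apply_le _ _ _ hr hΔ s t)
        (abs_mul_mul_apply_le _ _ _ he hΔΔ' s t))
    _ ≤ (4 / 3 * ‖Θ⁻¹‖) * E * (4 / 3 * ‖Θ⁻¹‖) * r * ‖Θ⁻¹‖
        + (4 / 3 * ‖Θ⁻¹‖) * D * ‖Θ⁻¹‖ * e * ‖Θ⁻¹‖ := by
      have hE0 : 0 ≤ E := (norm_nonneg _).trans hE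
      rw [hΘ.inv.eq]
      gcongr
      · exact norm_mul₃_le.trans (by gcongr)
      · exact norm_mul₃_le.trans (by gcongr)
    _ = 4 / 3 * ‖Θ⁻¹‖ ^ 3 * (4 / 3 * E * r + D * e) := by ring

end Perturbation

end Matrix

section Support

variable {n : Type*}

def restrictOn (S : Finset (n × n)) (M : Matrix n n ℝ) : S → ℝ := fun q => M q.1.1 q.1.2

def swapOn (S : Finset (n × n)) (hS : ∀ q, q ∈ S ↔ q.swap ∈ S) : S ≃ S :=
  (Equiv.prodComm n n).subtypeEquiv hS

variable {S : Finset (n × n)}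

lemma restrictOn_sub (M N : Matrix n n ℝ) :
    restrictOn S (M - N) = restrictOn S M - restrictOn S N := rfl

lemma restrictOn_transpose (hS : ∀ q, q ∈ S ↔ q.swap ∈ S) (M : Matrix n n ℝ) :
    restrictOn S Mᵀ = restrictOn S M ∘ swapOn S hS := rfl

lemma norm_restrictOn_le {M : Matrix n n ℝ} {c : ℝ} (hc : 0 ≤ c) (h : ∀ j k, |M j k| ≤ c) :
    ‖restrictOn S M‖ ≤ c :=
  (pi_norm_le_iff_of_nonneg hc).mpr fun _ => h _ _

lemma norm_restrictOn_le_iSup [Nonempty S] (M : Matrix n n ℝ) :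
    ‖restrictOn S M‖ ≤ ⨆ q : S, |M q.1.1 q.1.2| :=
  (pi_norm_le_iff_of_nonempty _).mpr fun q =>
    le_ciSup (f := fun q : S => |M q.1.1 q.1.2|) (Set.finite_range _).bddAbove q

lemma swap_mem_iff_of_isSymm {Θ : Matrix n n ℝ} (hΘ : Θ.IsSymm)
    (hS : ∀ q, q ∈ S ↔ Θ q.1 q.2 ≠ 0) (q : n × n) : q ∈ S ↔ q.swap ∈ S := by
  rw [hS, hS, Prod.fst_swap, Prod.snd_swap, hΘ.apply]

variable [DecidableEq n]

def embedOn (S : Finset (n × n)) (x : S → ℝ) : Matrix n n ℝ :=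
  Matrix.of fun j k => if h : (j, k) ∈ S then x ⟨(j, k), h⟩ else 0

lemma embedOn_apply_of_mem (x : S → ℝ) {j k : n} (h : (j, k) ∈ S) :
    embedOn S x j k = x ⟨(j, k), h⟩ := dif_pos h

lemma embedOn_apply_of_notMem (x : S → ℝ) {j k : n} (h : (j, k) ∉ S) :
    embedOn S x j k = 0 := dif_neg h

lemma embedOn_sub (x y : S → ℝ) : embedOn S (x - y) = embedOn S x - embedOn S y := by
  ext j k
  by_cases h : (j, k) ∈ S <;> simp [embedOn, h]

lemma abs_embedOn_apply_le (x : S → ℝ) (j k : n) : |embedOn S x j k| ≤ ‖x‖ := by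
  by_cases h : (j, k) ∈ S
  · rw [embedOn_apply_of_mem x h, ← Real.norm_eq_abs]
    exact norm_le_pi_norm x _
  · rw [embedOn_apply_of_notMem x h, abs_zero]
    exact norm_nonneg x

lemma embedOn_comp_swapOn (hS : ∀ q, q ∈ S ↔ q.swap ∈ S) (x : S → ℝ) :
    embedOn S (x ∘ swapOn S hS) = (embedOn S x)ᵀ := by
  ext j k
  by_cases h : (j, k) ∈ S
  · rw [transpose_apply, embedOn_apply_of_mem _ h, embedOn_apply_of_mem x ((hS _).mp h)]
    rfl
  · rw [transpose_apply, embedOn_apply_of_notMem _ h,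
      embedOn_apply_of_notMem x fun h' => h ((hS _).mpr h')]

lemma norm_embedOn_le [Fintype n] {d : ℕ}
    (hrow : ∀ j, (Finset.univ.filter fun k => (j, k) ∈ S).card ≤ d) (x : S → ℝ) :
    ‖embedOn S x‖ ≤ d * ‖x‖ := by
  refine Matrix.norm_le_of_sum_abs_le (fun j => ?_) (by positivity)
  rw [← Finset.sum_filter_of_ne (p := fun k => (j, k) ∈ S) fun k _ hk => ?_]
  · calc _ ≤ (Finset.univ.filter fun k => (j, k) ∈ S).card • ‖x‖ :=
          Finset.sum_le_card_nsmul _ _ _ fun k _ => abs_embedOn_apply_le x j k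
      _ ≤ d * ‖x‖ := by rw [nsmul_eq_mul]; gcongr; exact_mod_cast hrow j
  · by_contra h
    exact hk (by rw [embedOn_apply_of_notMem x h, abs_zero])

lemma card_filter_mem_eq_ncard [Fintype n] {Θ : Matrix n n ℝ}
    (hS : ∀ q, q ∈ S ↔ Θ q.1 q.2 ≠ 0) (j : n) :
    (Finset.univ.filter fun k => (j, k) ∈ S).card = Set.ncard {k | Θ j k ≠ 0} := by
  rw [← Set.ncard_coe_finset]
  congr 1
  ext k
  simp [hS]

end Support

section Kronecker

variable {p : ℕ} {S : Finset (Fin p × Fin p)}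

lemma kronSS_mulVec (A : Matrix (Fin p) (Fin p) ℝ) (x : S → ℝ) :
    kronSS p A S *ᵥ x = restrictOn S (A * embedOn S x * Aᵀ) := by
  funext q
  let g : Fin p × Fin p → ℝ := fun uv => A q.1.1 uv.1 * embedOn S x uv.1 uv.2 * A q.1.2 uv.2
  calc (kronSS p A S *ᵥ x) q = ∑ b : S, g b := by
        refine Finset.sum_congr rfl fun b _ => ?_
        simp only [kronSS, submatrix_apply, kroneckerMap_apply, g, embedOn_apply_of_mem x b.2]
        ring
    _ = ∑ uv, g uv := by
        rw [Finset.sum_coe_sort S g]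
        exact Finset.sum_subset (Finset.subset_univ S) fun uv _ huv => by
          simp [g, embedOn_apply_of_notMem x huv]
    _ = _ := by
        simp only [restrictOn, mul_apply, transpose_apply, Finset.sum_mul, Fintype.sum_prod_type, g]
        exact Finset.sum_comm

lemma norm_kronSS_le (A : Matrix (Fin p) (Fin p) ℝ) : ‖kronSS p A S‖ ≤ ‖A‖ ^ 2 := by
  refine Matrix.norm_le_of_sum_abs_le (fun a => ?_) (by positivity)
  calc ∑ b : S, |kronSS p A S a b|
        = ∑ uv ∈ S, |A a.1.1 (uv : Fin p × Fin p).1| * |A a.1.2 uv.2| := by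
        rw [← Finset.sum_coe_sort S]
        simp [kronSS, abs_mul]
    _ ≤ ∑ uv : Fin p × Fin p, |A a.1.1 uv.1| * |A a.1.2 uv.2| :=
        Finset.sum_le_sum_of_subset_of_nonneg (Finset.subset_univ _) fun _ _ _ => by positivity
    _ = (∑ u, |A a.1.1 u|) * ∑ v, |A a.1.2 v| := by
        rw [Finset.sum_mul_sum, Fintype.sum_prod_type]
    _ ≤ ‖A‖ ^ 2 := by
        rw [sq]
        gcongr
        · exact Matrix.sum_abs_le_norm _ _
        · exact Matrix.sum_abs_le_norm _ _

lemma kronSS_submatrix_swapOn (hS : ∀ q, q ∈ S ↔ q.swap ∈ S) (A : Matrix (Fin p) (Fin p) ℝ) :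
    (kronSS p A S).submatrix (swapOn S hS) (swapOn S hS) = kronSS p A S := by
  ext a b
  exact mul_comm _ _

lemma inv_kronSS_mulVec_comp_swapOn (hS : ∀ q, q ∈ S ↔ q.swap ∈ S)
    (A : Matrix (Fin p) (Fin p) ℝ) (v : S → ℝ) :
    (kronSS p A S)⁻¹ *ᵥ (v ∘ swapOn S hS) = ((kronSS p A S)⁻¹ *ᵥ v) ∘ swapOn S hS := by
  conv_lhs => rw [← kronSS_submatrix_swapOn hS A, inv_submatrix_equiv, submatrix_mulVec_equiv]
  rw [Function.comp_assoc, Equiv.self_comp_symm, Function.comp_id]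

end Kronecker

section GlassoMap

variable {p : ℕ}

/-- The map `F` of the proof: its fixed points `x` satisfy `(Θ + embedOn S x)⁻¹ = Sighat` on `S`. -/
noncomputable def glassoMap (Θ Sighat : Matrix (Fin p) (Fin p) ℝ) (S : Finset (Fin p × Fin p))
    (x : S → ℝ) : S → ℝ :=
  (kronSS p Θ⁻¹ S)⁻¹ *ᵥ restrictOn S (invRemainder Θ (embedOn S x) - (Sighat - Θ⁻¹))

variable {Θ Sighat : Matrix (Fin p) (Fin p) ℝ} {S : Finset (Fin p × Fin p)}

lemma glassoMap_comp_swapOn (hΘ : Θ.IsSymm) (hSighat : Sighat.IsSymm)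
    (hS : ∀ q, q ∈ S ↔ q.swap ∈ S) (x : S → ℝ) :
    glassoMap Θ Sighat S (x ∘ swapOn S hS) = glassoMap Θ Sighat S x ∘ swapOn S hS := by
  have h : invRemainder Θ (embedOn S (x ∘ swapOn S hS)) - (Sighat - Θ⁻¹) =
      (invRemainder Θ (embedOn S x) - (Sighat - Θ⁻¹))ᵀ := by
    rw [embedOn_comp_swapOn, invRemainder_transpose hΘ, transpose_sub, transpose_sub, hSighat.eq,
      hΘ.inv.eq]
  rw [glassoMap, h, restrictOn_transpose hS, inv_kronSS_mulVec_comp_swapOn]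
  rfl

lemma inv_apply_eq_of_glassoMap_eq (hΘ : Θ.IsSymm) (hΓ : IsUnit (kronSS p Θ⁻¹ S).det)
    {x : S → ℝ} (hx : glassoMap Θ Sighat S x = x) {q : Fin p × Fin p} (hq : q ∈ S) :
    Sighat q.1 q.2 = (Θ + embedOn S x)⁻¹ q.1 q.2 := by
  have h : kronSS p Θ⁻¹ S *ᵥ x =
      restrictOn S (invRemainder Θ (embedOn S x) - (Sighat - Θ⁻¹)) := by
    conv_lhs => rw [← hx]
    rw [glassoMap, mulVec_mulVec, mul_nonsing_inv _ hΓ, one_mulVec]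
  rw [kronSS_mulVec, hΘ.inv.eq] at h
  have hq := congrFun h ⟨q, hq⟩
  simp only [restrictOn, invRemainder, Matrix.sub_apply, Matrix.add_apply] at hq
  linarith

lemma glassoMap_mapsTo_closedBall (hΘ : Θ.IsSymm) (hdet : IsUnit Θ.det) {d : ℕ}
    (hrow : ∀ j, (Finset.univ.filter fun k => (j, k) ∈ S).card ≤ d) {r : ℝ} (hr : 0 ≤ r)
    (hκ : ‖Θ⁻¹‖ * (d * r) ≤ 1 / 4)
    (hA : ‖(kronSS p Θ⁻¹ S)⁻¹‖ * ‖Θ⁻¹‖ ^ 3 * (d * r) ≤ 1 / 4)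
    (hε : ‖(kronSS p Θ⁻¹ S)⁻¹‖ * ‖restrictOn S (Sighat - Θ⁻¹)‖ ≤ r / 2) :
    MapsTo (glassoMap Θ Sighat S) (closedBall 0 r) (closedBall 0 r) := by
  intro x hx
  rw [mem_closedBall_zero_iff] at hx ⊢
  have hΔ : ‖embedOn S x‖ ≤ d * r := (norm_embedOn_le hrow x).trans (by gcongr)
  have hR : ‖restrictOn S (invRemainder Θ (embedOn S x))‖ ≤ 4 / 3 * ‖Θ⁻¹‖ ^ 3 * (d * r) * r :=
    norm_restrictOn_le (by positivity) fun j k =>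
      (abs_invRemainder_apply_le hΘ hdet hr (fun i j => (abs_embedOn_apply_le x i j).trans hx)
        (le_trans (by gcongr) hκ) j k).trans (by gcongr)
  calc ‖glassoMap Θ Sighat S x‖
      ≤ ‖(kronSS p Θ⁻¹ S)⁻¹‖ *
          ‖restrictOn S (invRemainder Θ (embedOn S x)) - restrictOn S (Sighat - Θ⁻¹)‖ :=
        linfty_opNorm_mulVec _ _
    _ ≤ ‖(kronSS p Θ⁻¹ S)⁻¹‖ *
          (4 / 3 * ‖Θ⁻¹‖ ^ 3 * (d * r) * r + ‖restrictOn S (Sighat - Θ⁻¹)‖) := by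
        gcongr
        exact (norm_sub_le _ _).trans (by gcongr)
    _ = 4 / 3 * (‖(kronSS p Θ⁻¹ S)⁻¹‖ * ‖Θ⁻¹‖ ^ 3 * (d * r)) * r
          + ‖(kronSS p Θ⁻¹ S)⁻¹‖ * ‖restrictOn S (Sighat - Θ⁻¹)‖ := by ring
    _ ≤ 4 / 3 * (1 / 4) * r + r / 2 := by gcongr
    _ ≤ r := by linarith

lemma dist_glassoMap_le (hΘ : Θ.IsSymm) (hdet : IsUnit Θ.det) {d : ℕ}
    (hrow : ∀ j, (Finset.univ.filter fun k => (j, k) ∈ S).card ≤ d) {r : ℝ} (hr : 0 ≤ r)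
    (hκ : ‖Θ⁻¹‖ * (d * r) ≤ 1 / 4)
    (hA : ‖(kronSS p Θ⁻¹ S)⁻¹‖ * ‖Θ⁻¹‖ ^ 3 * (d * r) ≤ 1 / 4)
    {x y : S → ℝ} (hx : x ∈ closedBall 0 r) (hy : y ∈ closedBall 0 r) :
    dist (glassoMap Θ Sighat S x) (glassoMap Θ Sighat S y) ≤ 7 / 9 * dist x y := by
  rw [mem_closedBall_zero_iff] at hx hy
  have hD : ∀ z : S → ℝ, ‖z‖ ≤ r → ‖embedOn S z‖ ≤ d * r :=
    fun z hz => (norm_embedOn_le hrow z).trans (by gcongr)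
  have hR : ‖restrictOn S (invRemainder Θ (embedOn S x) - invRemainder Θ (embedOn S y))‖ ≤
      4 / 3 * ‖Θ⁻¹‖ ^ 3 * (4 / 3 * (d * ‖x - y‖) * r + d * r * ‖x - y‖) :=
    norm_restrictOn_le (by positivity) fun j k =>
      abs_invRemainder_sub_apply_le hΘ hdet hr (norm_nonneg _)
        (fun i j => (abs_embedOn_apply_le x i j).trans hx)
        (fun i j => by rw [← embedOn_sub]; exact abs_embedOn_apply_le _ i j) (hD x hx) (hD y hy)
        (by rw [← embedOn_sub]; exact norm_embedOn_le hrow _) hκ j k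
  rw [dist_eq_norm, dist_eq_norm, glassoMap, glassoMap, ← mulVec_sub, ← restrictOn_sub,
    sub_sub_sub_cancel_right]
  calc _ ≤ ‖(kronSS p Θ⁻¹ S)⁻¹‖ *
          ‖restrictOn S (invRemainder Θ (embedOn S x) - invRemainder Θ (embedOn S y))‖ :=
        linfty_opNorm_mulVec _ _
    _ ≤ ‖(kronSS p Θ⁻¹ S)⁻¹‖ *
          (4 / 3 * ‖Θ⁻¹‖ ^ 3 * (4 / 3 * (d * ‖x - y‖) * r + d * r * ‖x - y‖)) := by gcongr
    _ = 28 / 9 * (‖(kronSS p Θ⁻¹ S)⁻¹‖ * ‖Θ⁻¹‖ ^ 3 * (d * r)) * ‖x - y‖ := by ring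
    _ ≤ 28 / 9 * (1 / 4) * ‖x - y‖ := by gcongr
    _ = 7 / 9 * ‖x - y‖ := by norm_num

lemma exists_glassoMap_fixedPoint (hΘ : Θ.IsSymm) (hdet : IsUnit Θ.det)
    (hSighat : Sighat.IsSymm) (hS : ∀ q, q ∈ S ↔ q.swap ∈ S) {d : ℕ}
    (hrow : ∀ j, (Finset.univ.filter fun k => (j, k) ∈ S).card ≤ d) {r : ℝ} (hr : 0 ≤ r)
    (hκ : ‖Θ⁻¹‖ * (d * r) ≤ 1 / 4)
    (hA : ‖(kronSS p Θ⁻¹ S)⁻¹‖ * ‖Θ⁻¹‖ ^ 3 * (d * r) ≤ 1 / 4)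
    (hε : ‖(kronSS p Θ⁻¹ S)⁻¹‖ * ‖restrictOn S (Sighat - Θ⁻¹)‖ ≤ r / 2) :
    ∃ z : S → ℝ, ‖z‖ ≤ r ∧ glassoMap Θ Sighat S z = z ∧ z ∘ swapOn S hS = z := by
  obtain ⟨z, hz, hfix, hswap⟩ := exists_common_fixedPoint_of_contractingOn isClosed_closedBall
    (nonempty_closedBall.mpr hr) (K := 7 / 9) (by norm_num)
    (glassoMap_mapsTo_closedBall hΘ hdet hrow hr hκ hA hε)
    (fun x hx y hy => by exact_mod_cast dist_glassoMap_le hΘ hdet hrow hr hκ hA hx hy)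
    (g := (· ∘ swapOn S hS)) (fun x hx => mem_closedBall_zero_iff.mpr
      ((pi_norm_comp_le x _).trans (mem_closedBall_zero_iff.mp hx)))
    (fun x _ => glassoMap_comp_swapOn hΘ hSighat hS x)
  exact ⟨z, mem_closedBall_zero_iff.mp hz, hfix, hswap⟩

end GlassoMap

lemma quarter_bounds_of_le_one_div {κΓ κ D : ℝ} (hκ : 0 ≤ κ) (hκΓκ : 1 ≤ κΓ * κ ^ 2)
    (h : D ≤ 1 / (4 * κΓ * κ ^ 3)) :
    κΓ * κ ^ 3 * D ≤ 1 / 4 ∧ κ * D ≤ 1 / 4 := by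
  have hκ' : 0 < κ := hκ.lt_of_ne (by rintro rfl; norm_num at hκΓκ)
  rw [le_div_iff₀ (by nlinarith)] at h
  exact ⟨by linarith, by nlinarith⟩

theorem glasso_brouwer_fixed_point_general (p d : ℕ) (hp : 0 < p)
    (Θs : Matrix (Fin p) (Fin p) ℝ) (hsym : Θs.IsSymm) (hpd : Θs.PosDef)
    (S : Finset (Fin p × Fin p)) (hS : ∀ q : Fin p × Fin p, q ∈ S ↔ Θs q.1 q.2 ≠ 0)
    (hdiag : ∀ j : Fin p, (j, j) ∈ S)
    (hrow : ∀ j : Fin p, Set.ncard {k : Fin p | Θs j k ≠ 0} ≤ d)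
    (hΓinv : IsUnit (kronSS p Θs⁻¹ S).det)
    (Sighat : Matrix (Fin p) (Fin p) ℝ) (hSighat : Sighat.IsSymm)
    (r : ℝ) (hr : 0 < r)
    (hdev : matInf (kronSS p Θs⁻¹ S)⁻¹ *
        (⨆ q : {q : Fin p × Fin p // q ∈ S}, |Sighat q.1.1 q.1.2 - Θs⁻¹ q.1.1 q.1.2|) ≤
      r / 2)
    (lmin : ℝ)
    (hdr : (d : ℝ) * r ≤
      min (lmin / 2) (min (1 / (2 * matInf Θs⁻¹))
        (1 / (4 * matInf (kronSS p Θs⁻¹ S)⁻¹ * matInf Θs⁻¹ ^ 3)))) :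
    ∃ Θh : Matrix (Fin p) (Fin p) ℝ, Θh.IsSymm ∧
      (∀ q : Fin p × Fin p, q ∉ S → Θh q.1 q.2 = 0) ∧
      (∀ i j : Fin p, |Θh i j - Θs i j| ≤ r) ∧
      specNorm (Θh - Θs) ≤ d * r ∧
      IsUnit Θh.det ∧
      ∀ q ∈ S, Sighat q.1 q.2 = Θh⁻¹ q.1 q.2 := by
  have : Nonempty S := ⟨⟨(⟨0, hp⟩, ⟨0, hp⟩), hdiag _⟩⟩
  have hdet : IsUnit Θs.det := (isUnit_iff_isUnit_det _).mp hpd.isUnit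
  have hswap := swap_mem_iff_of_isSymm hsym hS
  have hrowS j := (card_filter_mem_eq_ncard hS j).trans_le (hrow j)
  rw [matInf_eq_norm] at hdev
  rw [matInf_eq_norm, matInf_eq_norm] at hdr
  set κΓ := ‖(kronSS p Θs⁻¹ S)⁻¹‖
  set κ := ‖Θs⁻¹‖
  obtain ⟨hA, hκD⟩ := quarter_bounds_of_le_one_div (κ := κ) (norm_nonneg _)
    ((one_le_norm_inv_mul_norm hΓinv).trans (by gcongr; exact norm_kronSS_le _))
    ((hdr.trans (min_le_right _ _)).trans (min_le_right _ _))
  have hε : κΓ * ‖restrictOn S (Sighat - Θs⁻¹)‖ ≤ r / 2 :=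
    (mul_le_mul_of_nonneg_left (norm_restrictOn_le_iSup _) (norm_nonneg _)).trans hdev
  obtain ⟨z, hzr, hfix, hzswap⟩ :=
    exists_glassoMap_fixedPoint hsym hdet hSighat hswap hrowS hr.le hκD hA hε
  have hΔsym : (embedOn S z).IsSymm := by
    rw [IsSymm, ← embedOn_comp_swapOn hswap, hzswap]
  have hΔ : ‖embedOn S z‖ ≤ d * r := (norm_embedOn_le hrowS z).trans (by gcongr)
  refine ⟨Θs + embedOn S z, hsym.add hΔsym, fun q hq => ?_, fun i j => ?_, ?_,
    isUnit_det_add hdet ?_, fun q hq => inv_apply_eq_of_glassoMap_eq hsym hΓinv hfix hq⟩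
  · rw [Matrix.add_apply, embedOn_apply_of_notMem z hq, add_zero]
    exact not_not.mp fun h => hq ((hS q).mpr h)
  · rw [Matrix.add_apply, add_sub_cancel_left]
    exact (abs_embedOn_apply_le z i j).trans hzr
  · rw [add_sub_cancel_left]
    exact (specNorm_le_norm hΔsym).trans hΔ
  · calc κ * ‖embedOn S z‖ ≤ κ * (d * r) := by gcongr
      _ < 1 := by linarith

/-- Brouwer fixed-point construction for the graphical Lasso: under the
stated conditions on `Θ*`, its support `S` (containing the diagonal, with at most `d`
nonzeros per row), `Σ̂` and `r`, there is a symmetric matrix `Θ̂` supported on `S` with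
`‖Θ̂ − Θ*‖_max ≤ r`, `‖Θ̂ − Θ*‖₂ ≤ d·r`, `Θ̂` invertible, and `Σ̂_{jk} = (Θ̂⁻¹)_{jk}` for
all `(j,k) ∈ S`. -/
theorem glasso_brouwer_fixed_point (p d : ℕ) (hp : 0 < p) (hd : 0 < d)
    (Θs : Matrix (Fin p) (Fin p) ℝ) (hsym : Θs.IsSymm) (hpd : Θs.PosDef)
    (S : Finset (Fin p × Fin p)) (hS : ∀ q : Fin p × Fin p, q ∈ S ↔ Θs q.1 q.2 ≠ 0)
    (hdiag : ∀ j : Fin p, (j, j) ∈ S)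
    (hrow : ∀ j : Fin p, Set.ncard {k : Fin p | Θs j k ≠ 0} ≤ d)
    (hΓinv : IsUnit (kronSS p Θs⁻¹ S).det)
    (Sighat : Matrix (Fin p) (Fin p) ℝ) (hSighat : Sighat.IsSymm)
    (r : ℝ) (hr : 0 < r)
    (hdev : matInf (kronSS p Θs⁻¹ S)⁻¹ *
        (⨆ q : {q : Fin p × Fin p // q ∈ S}, |Sighat q.1.1 q.1.2 - Θs⁻¹ q.1.1 q.1.2|) ≤
      r / 2)
    (lmin : ℝ)
    (hlmin : IsLeast {c : ℝ | ∃ v : EuclideanSpace ℝ (Fin p), ‖v‖ = 1 ∧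
        c = ∑ i, ∑ j, v i * Θs i j * v j} lmin)
    (hdr : (d : ℝ) * r ≤
      min (lmin / 2) (min (1 / (2 * matInf Θs⁻¹))
        (1 / (4 * matInf (kronSS p Θs⁻¹ S)⁻¹ * matInf Θs⁻¹ ^ 3)))) :
    ∃ Θh : Matrix (Fin p) (Fin p) ℝ, Θh.IsSymm ∧
      (∀ q : Fin p × Fin p, q ∉ S → Θh q.1 q.2 = 0) ∧
      (∀ i j : Fin p, |Θh i j - Θs i j| ≤ r) ∧
      specNorm (Θh - Θs) ≤ d * r ∧
      IsUnit Θh.det ∧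
      ∀ q ∈ S, Sighat q.1 q.2 = Θh⁻¹ q.1 q.2 :=
  glasso_brouwer_fixed_point_general p d hp Θs hsym hpd S hS hdiag hrow hΓinv Sighat hSighat r hr
    hdev lmin hdr
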